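/- arXiv:1605.03102 — 2 statements merged into one kernel-verified Lean document; each statement's English description precedes it below -/
import Mathlib

section
/- Define v : (0, π) → ℝ by v(θ) = -(1/(2π))·log(cos²(θ/2)) and ψ : (0, π) → ℝ by ψ(θ) = (1/(4π))·(log(sin²(θ/2)) - 2·log(cos²(θ/2)) - 1). Then v(θ) ≥ ψ(θ) for all θ ∈ (0, π), and (1/sin θ)·d/dθ(sin θ · v'(θ)) = 1/(2π) for all θ ∈ (0, π). -/
open Real Set Filter

theorem stmt_9 (v ψ : ℝ → ℝ)
    (hv : ∀ θ, v θ = -(1 / (2 * Real.pi)) * Real.log (Real.cos (θ/2) ^ 2))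
    (hψ : ∀ θ, ψ θ = (1 / (4 * Real.pi)) *
      (Real.log (Real.sin (θ/2) ^ 2) - 2 * Real.log (Real.cos (θ/2) ^ 2) - 1)) :
    (∀ θ ∈ Set.Ioo (0:ℝ) Real.pi, ψ θ ≤ v θ) ∧
    (∀ θ ∈ Set.Ioo (0:ℝ) Real.pi,
      (1 / Real.sin θ) * deriv (fun t => Real.sin t * deriv v t) θ
        = 1 / (2 * Real.pi)) := by
  have hπ : (0:ℝ) < Real.pi := Real.pi_pos
  -- derivative of v on Ioo 0 π
  have hcos : ∀ t ∈ Set.Ioo (0:ℝ) Real.pi, 0 < Real.cos (t/2) := by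
    intro t ht
    apply Real.cos_pos_of_mem_Ioo
    constructor <;> [nlinarith [ht.1]; nlinarith [ht.2]]
  have hDv : ∀ t ∈ Set.Ioo (0:ℝ) Real.pi,
      deriv v t = (1 / (2 * Real.pi)) * (Real.sin (t/2) / Real.cos (t/2)) := by
    intro t ht
    have hc := hcos t ht
    have h1 : HasDerivAt (fun x : ℝ => Real.cos (x/2)) (-Real.sin (t/2) * (1/2)) t :=
      ((Real.hasDerivAt_cos (t/2)).comp t ((hasDerivAt_id' t).div_const 2) :)
    have h2 := h1.pow 2
    have h3 := h2.log (pow_ne_zero 2 (ne_of_gt hc))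
    have h4 := h3.const_mul (-(1 / (2 * Real.pi)))
    have h5 : HasDerivAt v (-(1 / (2 * Real.pi)) *
        ((2 : ℕ) * Real.cos (t/2) ^ (2-1) * (-Real.sin (t/2) * (1/2)) /
          Real.cos (t/2) ^ 2)) t := by
      have : v = fun x : ℝ => -(1 / (2 * Real.pi)) * Real.log (Real.cos (x/2) ^ 2) :=
        funext hv
      rw [this]; exact h4
    rw [h5.deriv]
    have hc' : Real.cos (t/2) ≠ 0 := ne_of_gt hc
    field_simp
    ring
  have hsin2 : ∀ t : ℝ, Real.sin t = 2 * Real.sin (t/2) * Real.cos (t/2) := by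
    intro t
    have := Real.sin_two_mul (t/2)
    rw [show 2 * (t/2) = t by ring] at this
    rw [this]
  have hcos2 : ∀ t : ℝ, Real.cos t = 1 - 2 * Real.sin (t/2) ^ 2 := by
    intro t
    have := Real.cos_two_mul' (t/2)
    rw [show 2 * (t/2) = t by ring] at this
    rw [this]
    nlinarith [Real.sin_sq_add_cos_sq (t/2)]
  constructor
  · intro θ hθ
    rw [hv, hψ]
    have hs : Real.sin (θ/2) ^ 2 ≤ 1 := by
      nlinarith [Real.sin_sq_add_cos_sq (θ/2), sq_nonneg (Real.cos (θ/2))]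
    have hlog : Real.log (Real.sin (θ/2) ^ 2) ≤ 1 := by
      calc Real.log (Real.sin (θ/2) ^ 2) ≤ 0 := Real.log_nonpos (by positivity) hs
        _ ≤ 1 := zero_le_one
    have h4π : (0:ℝ) < 4 * Real.pi := by positivity
    rw [show -(1 / (2 * Real.pi)) * Real.log (Real.cos (θ/2) ^ 2)
        = (1 / (4 * Real.pi)) * (-2 * Real.log (Real.cos (θ/2) ^ 2)) by
      field_simp; ring]
    apply mul_le_mul_of_nonneg_left _ (by positivity)
    linarith
  · intro θ hθ
    have hsθ : 0 < Real.sin θ := Real.sin_pos_of_pos_of_lt_pi hθ.1 hθ.2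
    -- eventual equality
    have hev : (fun t => Real.sin t * deriv v t)
        =ᶠ[nhds θ] fun t => (1 / (2 * Real.pi)) * (1 - Real.cos t) := by
      filter_upwards [isOpen_Ioo.mem_nhds hθ] with t ht
      have hc := hcos t ht
      rw [hDv t ht, hsin2 t, hcos2 t]
      have hc' : Real.cos (t/2) ≠ 0 := ne_of_gt hc
      field_simp
      ring
    rw [hev.deriv_eq]
    have hw : HasDerivAt (fun t => (1 / (2 * Real.pi)) * (1 - Real.cos t))
        ((1 / (2 * Real.pi)) * Real.sin θ) θ := by
      have := ((Real.hasDerivAt_cos θ).const_sub 1).const_mul (1 / (2 * Real.pi))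
      simpa using this
    rw [hw.deriv]
    field_simp
end

section
/- Let A be a symmetric positive definite real n×n matrix and b ∈ ℝⁿ. Then there exists a unique u ∈ ℝⁿ satisfying the linear complementarity conditions: u ≥ 0 (componentwise), A·u + b ≥ 0 (componentwise), and uᵀ(A·u + b) = 0. Moreover, this u is the unique minimizer of the functional v ↦ vᵀA·v + 2·bᵀv over the cone {v ∈ ℝⁿ : v ≥ 0}. -/
open Matrix

private lemma aux_swap {n : ℕ} {A : Matrix (Fin n) (Fin n) ℝ} (hsymm : A.IsSymm) (x y : Fin n → ℝ) :
    x ⬝ᵥ A *ᵥ y = y ⬝ᵥ A *ᵥ x := by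
  rw [Matrix.dotProduct_mulVec, ← Matrix.mulVec_transpose, hsymm, dotProduct_comm]

private lemma aux_quad_pos {n : ℕ} {A : Matrix (Fin n) (Fin n) ℝ} (hpd : A.PosDef)
    {x : Fin n → ℝ} (hx : x ≠ 0) : 0 < x ⬝ᵥ A *ᵥ x := by
  simpa using hpd.dotProduct_mulVec_pos hx

private lemma aux_quad_nonneg {n : ℕ} {A : Matrix (Fin n) (Fin n) ℝ} (hpd : A.PosDef)
    (x : Fin n → ℝ) : 0 ≤ x ⬝ᵥ A *ᵥ x := by
  by_cases hx : x = 0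
  · simp [hx]
  · exact (aux_quad_pos hpd hx).le

private lemma aux_expand {n : ℕ} {A : Matrix (Fin n) (Fin n) ℝ} (hsymm : A.IsSymm)
    (b x y : Fin n → ℝ) :
    (x + y) ⬝ᵥ A *ᵥ (x + y) + 2 * (b ⬝ᵥ (x + y))
      = (x ⬝ᵥ A *ᵥ x + 2 * (b ⬝ᵥ x)) + (2 * (y ⬝ᵥ (A *ᵥ x + b)) + y ⬝ᵥ A *ᵥ y) := by
  simp only [Matrix.mulVec_add, dotProduct_add, add_dotProduct]
  linarith [aux_swap hsymm x y, dotProduct_comm b y]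

private lemma aux_cont_quad {n : ℕ} (A : Matrix (Fin n) (Fin n) ℝ) :
    Continuous fun v : Fin n → ℝ => v ⬝ᵥ A *ᵥ v := by
  simp only [dotProduct, Matrix.mulVec]
  exact continuous_finset_sum _ fun i _ => (continuous_apply i).mul
    (continuous_finset_sum _ fun j _ => continuous_const.mul (continuous_apply j))

private lemma aux_cont_dot {n : ℕ} : Continuous fun v : Fin n → ℝ => v ⬝ᵥ v := by
  simp only [dotProduct]
  exact continuous_finset_sum _ fun i _ => (continuous_apply i).mul (continuous_apply i)

private lemma aux_cont_dotb {n : ℕ} (b : Fin n → ℝ) :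
    Continuous fun v : Fin n → ℝ => b ⬝ᵥ v := by
  simp only [dotProduct]
  exact continuous_finset_sum _ fun i _ => continuous_const.mul (continuous_apply i)

private lemma aux_coerc {n : ℕ} (A : Matrix (Fin n) (Fin n) ℝ) (hpd : A.PosDef) :
    ∃ c > 0, ∀ x : Fin n → ℝ, c * (x ⬝ᵥ x) ≤ x ⬝ᵥ A *ᵥ x := by
  rcases Nat.eq_zero_or_pos n with hn | hn
  · refine ⟨1, one_pos, fun x => ?_⟩
    subst hn
    simp [dotProduct]
  · set S : Set (Fin n → ℝ) := {x | x ⬝ᵥ x = 1} with hS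
    have hSclosed : IsClosed S := isClosed_eq aux_cont_dot continuous_const
    have hSbdd : Bornology.IsBounded S := by
      apply (Metric.isBounded_closedBall (x := (0 : Fin n → ℝ)) (r := 1)).subset
      intro x hx
      simp only [Metric.mem_closedBall, dist_zero_right]
      rw [pi_norm_le_iff_of_nonneg zero_le_one]
      intro i
      rw [Real.norm_eq_abs, abs_le_one_iff_mul_self_le_one]
      calc x i * x i ≤ ∑ j, x j * x j :=
            Finset.single_le_sum (fun j _ => mul_self_nonneg (x j)) (Finset.mem_univ i)
        _ = 1 := hx
    have hScompact : IsCompact S := Metric.isCompact_of_isClosed_isBounded hSclosed hSbdd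
    have hSne : S.Nonempty := by
      refine ⟨Pi.single ⟨0, hn⟩ 1, ?_⟩
      simp [hS, single_dotProduct]
    obtain ⟨x0, hx0S, hmin⟩ := hScompact.exists_isMinOn hSne (aux_cont_quad A).continuousOn
    have hx0ne : x0 ≠ 0 := by
      intro h
      rw [hS] at hx0S
      simp [h] at hx0S
    refine ⟨x0 ⬝ᵥ A *ᵥ x0, aux_quad_pos hpd hx0ne, fun x => ?_⟩
    by_cases hx : x = 0
    · simp [hx]
    · have ht : 0 < x ⬝ᵥ x := by
        have hnn : 0 ≤ x ⬝ᵥ x := Finset.sum_nonneg fun i _ => mul_self_nonneg (x i)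
        rcases hnn.lt_or_eq with h | h
        · exact h
        · exact absurd ((dotProduct_self_eq_zero).mp h.symm) hx
      set t := x ⬝ᵥ x with hts
      set y := (Real.sqrt t)⁻¹ • x with hy
      have hsq : (Real.sqrt t)⁻¹ * (Real.sqrt t)⁻¹ * t = 1 := by
        rw [← Real.sqrt_mul_self ht.le]
        field_simp
        exact (Real.sq_sqrt (Real.sqrt_nonneg _)).symm
      have hyS : y ∈ S := by
        simp only [hS, Set.mem_setOf_eq, hy, smul_dotProduct, dotProduct_smul,
          smul_eq_mul]
        rw [← mul_assoc]; exact hsq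
      have h1 : x0 ⬝ᵥ A *ᵥ x0 ≤ y ⬝ᵥ A *ᵥ y := hmin hyS
      have h2 : y ⬝ᵥ A *ᵥ y = (Real.sqrt t)⁻¹ * (Real.sqrt t)⁻¹ * (x ⬝ᵥ A *ᵥ x) := by
        simp only [hy, smul_dotProduct, Matrix.mulVec_smul, dotProduct_smul,
          smul_eq_mul]
        ring
      have ht' : (Real.sqrt t)⁻¹ * (Real.sqrt t)⁻¹ = t⁻¹ := by
        rw [← mul_inv, Real.mul_self_sqrt ht.le]
      rw [h2, ht'] at h1
      calc (x0 ⬝ᵥ A *ᵥ x0) * t ≤ (t⁻¹ * (x ⬝ᵥ A *ᵥ x)) * t :=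
            mul_le_mul_of_nonneg_right h1 ht.le
        _ = x ⬝ᵥ A *ᵥ x := by field_simp

private lemma aux_single_dot {n : ℕ} (w : Fin n → ℝ) (t : ℝ) (i : Fin n) :
    (t • (Pi.single i 1 : Fin n → ℝ)) ⬝ᵥ w = t * w i := by
  rw [smul_dotProduct, single_dotProduct, smul_eq_mul, one_mul]

private lemma aux_single_quad {n : ℕ} (A : Matrix (Fin n) (Fin n) ℝ) (t : ℝ) (i : Fin n) :
    (t • (Pi.single i 1 : Fin n → ℝ)) ⬝ᵥ A *ᵥ (t • (Pi.single i 1 : Fin n → ℝ))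
      = t * t * (((Pi.single i 1 : Fin n → ℝ)) ⬝ᵥ A *ᵥ ((Pi.single i 1 : Fin n → ℝ))) := by
  simp only [smul_dotProduct, Matrix.mulVec_smul, dotProduct_smul, smul_eq_mul]
  ring

private lemma aux_single_ne {n : ℕ} (i : Fin n) : ((Pi.single i 1 : Fin n → ℝ)) ≠ 0 := by
  intro h
  have := congrFun h i
  simp at this

private lemma aux_single_nonneg {n : ℕ} (i j : Fin n) : 0 ≤ (Pi.single i 1 : Fin n → ℝ) j := by
  rcases eq_or_ne j i with h | h
  · subst h; simp
  · simp [Pi.single_eq_of_ne h]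

private lemma aux_dot_nonneg {n : ℕ} {x y : Fin n → ℝ} (hx : ∀ i, 0 ≤ x i)
    (hy : ∀ i, 0 ≤ y i) : 0 ≤ x ⬝ᵥ y :=
  Finset.sum_nonneg fun i _ => mul_nonneg (hx i) (hy i)

theorem stmt_17 (n : ℕ) (A : Matrix (Fin n) (Fin n) ℝ)
    (hsymm : A.IsSymm) (hpd : A.PosDef) (b : Fin n → ℝ) :
    ∃ u : Fin n → ℝ,
      ((∀ i, 0 ≤ u i) ∧ (∀ i, 0 ≤ A.mulVec u i + b i) ∧
        dotProduct u (A.mulVec u + b) = 0) ∧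
      (∀ u' : Fin n → ℝ,
        ((∀ i, 0 ≤ u' i) ∧ (∀ i, 0 ≤ A.mulVec u' i + b i) ∧
          dotProduct u' (A.mulVec u' + b) = 0) → u' = u) ∧
      (∀ v : Fin n → ℝ, (∀ i, 0 ≤ v i) →
        dotProduct u (A.mulVec u) + 2 * dotProduct b u
          ≤ dotProduct v (A.mulVec v) + 2 * dotProduct b v) ∧
      (∀ v : Fin n → ℝ, (∀ i, 0 ≤ v i) →
        dotProduct v (A.mulVec v) + 2 * dotProduct b v
          = dotProduct u (A.mulVec u) + 2 * dotProduct b u → v = u) := by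
  obtain ⟨c, hc, hco⟩ := aux_coerc A hpd
  -- lower bound for the functional
  have hlow : ∀ v : Fin n → ℝ,
      c/2 * (v ⬝ᵥ v) - 2/c * (b ⬝ᵥ b) ≤ v ⬝ᵥ A *ᵥ v + 2 * (b ⬝ᵥ v) := by
    intro v
    have h1 : c * (v ⬝ᵥ v) ≤ v ⬝ᵥ A *ᵥ v := hco v
    have h2 : 0 ≤ c/2 * (v ⬝ᵥ v) + 2/c * (b ⬝ᵥ b) + 2 * (b ⬝ᵥ v) := by
      have heq : c/2 * (v ⬝ᵥ v) + 2/c * (b ⬝ᵥ b) + 2 * (b ⬝ᵥ v)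
          = ∑ i, (c/2 * (v i * v i) + 2/c * (b i * b i) + 2 * (b i * v i)) := by
        simp only [dotProduct, Finset.mul_sum, ← Finset.sum_add_distrib]
      rw [heq]
      refine Finset.sum_nonneg fun i _ => ?_
      have : c/2 * (v i * v i) + 2/c * (b i * b i) + 2 * (b i * v i)
          = (c * v i + 2 * b i)^2 / (2*c) := by
        field_simp
        ring
      rw [this]
      positivity
    nlinarith [dotProduct_self_eq_zero (v := v), h1,
      Finset.sum_nonneg (fun i (_ : i ∈ Finset.univ) => mul_self_nonneg (v i))]
  -- the compact feasible region
  set r : ℝ := 4/(c^2) * (b ⬝ᵥ b) + 1 with hr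
  have hbb : 0 ≤ b ⬝ᵥ b := Finset.sum_nonneg fun i _ => mul_self_nonneg (b i)
  have hr0 : 0 ≤ r := by positivity
  have hbig : ∀ v : Fin n → ℝ, r < v ⬝ᵥ v → 0 < v ⬝ᵥ A *ᵥ v + 2 * (b ⬝ᵥ v) := by
    intro v hrv
    have h1 := hlow v
    have h2 : c/2 * r < c/2 * (v ⬝ᵥ v) := mul_lt_mul_of_pos_left hrv (by linarith)
    have h3 : c/2 * r - 2/c * (b ⬝ᵥ b) = c/2 := by
      rw [hr]; field_simp; ring
    linarith
  set C : Set (Fin n → ℝ) := {v | (∀ i, 0 ≤ v i) ∧ v ⬝ᵥ v ≤ r} with hC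
  have hKclosed : IsClosed {v : Fin n → ℝ | ∀ i, 0 ≤ v i} := by
    have : {v : Fin n → ℝ | ∀ i, 0 ≤ v i} = ⋂ i, {v | 0 ≤ v i} := by
      ext v; simp
    rw [this]
    exact isClosed_iInter fun i => isClosed_le continuous_const (continuous_apply i)
  have hCclosed : IsClosed C :=
    hKclosed.inter (isClosed_le aux_cont_dot continuous_const)
  have hCbdd : Bornology.IsBounded C := by
    apply (Metric.isBounded_closedBall (x := (0 : Fin n → ℝ)) (r := Real.sqrt r)).subset
    intro v hv
    simp only [Metric.mem_closedBall, dist_zero_right]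
    rw [pi_norm_le_iff_of_nonneg (Real.sqrt_nonneg r)]
    intro i
    rw [Real.norm_eq_abs]
    apply Real.abs_le_sqrt
    calc v i ^ 2 = v i * v i := sq (v i) ▸ (sq (v i)).symm ▸ (pow_two (v i))
      _ ≤ ∑ j, v j * v j :=
          Finset.single_le_sum (fun j _ => mul_self_nonneg (v j)) (Finset.mem_univ i)
      _ ≤ r := hv.2
  have hCcompact : IsCompact C := Metric.isCompact_of_isClosed_isBounded hCclosed hCbdd
  have hCne : C.Nonempty := by
    refine ⟨0, fun i => le_refl _, ?_⟩
    simpa using hr0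
  have hfcont : Continuous fun v : Fin n → ℝ => v ⬝ᵥ A *ᵥ v + 2 * (b ⬝ᵥ v) :=
    (aux_cont_quad A).add (continuous_const.mul (aux_cont_dotb b))
  obtain ⟨u, huC, humin⟩ := hCcompact.exists_isMinOn hCne hfcont.continuousOn
  have hu0 : ∀ i, 0 ≤ u i := huC.1
  have hf0 : (0 : Fin n → ℝ) ⬝ᵥ A *ᵥ (0 : Fin n → ℝ) + 2 * (b ⬝ᵥ (0 : Fin n → ℝ)) = 0 := by
    simp
  have hglobal : ∀ v : Fin n → ℝ, (∀ i, 0 ≤ v i) →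
      u ⬝ᵥ A *ᵥ u + 2 * (b ⬝ᵥ u) ≤ v ⬝ᵥ A *ᵥ v + 2 * (b ⬝ᵥ v) := by
    intro v hv
    by_cases hvr : v ⬝ᵥ v ≤ r
    · exact humin ⟨hv, hvr⟩
    · have h1 : u ⬝ᵥ A *ᵥ u + 2 * (b ⬝ᵥ u) ≤ 0 := by
        have := humin (show (0 : Fin n → ℝ) ∈ C from ⟨fun i => le_refl _, by simpa using hr0⟩)
        simpa [hf0] using this
      have h2 := hbig v (not_le.mp hvr)
      linarith
  -- first variation: A *ᵥ u + b ≥ 0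
  have hg : ∀ i, 0 ≤ (A *ᵥ u) i + b i := by
    intro i
    by_contra hneg
    push_neg at hneg
    set g : ℝ := (A *ᵥ u) i + b i with hgd
    set a : ℝ := (Pi.single i 1 : Fin n → ℝ) ⬝ᵥ A *ᵥ (Pi.single i 1 : Fin n → ℝ) with ha
    have hapos : 0 < a := aux_quad_pos hpd (aux_single_ne i)
    set t : ℝ := -g / a with htd
    have htpos : 0 < t := div_pos (by linarith) hapos
    set y : Fin n → ℝ := t • (Pi.single i 1 : Fin n → ℝ) with hyd
    have hvK : ∀ j, 0 ≤ (u + y) j := by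
      intro j
      have : 0 ≤ y j := by
        rw [hyd]
        exact mul_nonneg htpos.le (aux_single_nonneg i j)
      simpa using add_nonneg (hu0 j) this
    have hexp := aux_expand hsymm b u y
    have hy1 : y ⬝ᵥ (A *ᵥ u + b) = t * g := by
      rw [hyd, aux_single_dot]
      simp [hgd]
    have hy2 : y ⬝ᵥ A *ᵥ y = t * t * a := by
      rw [hyd, aux_single_quad, ha]
    have hta : t * a = -g := by
      rw [htd]; field_simp
    have hdec : 2 * (y ⬝ᵥ (A *ᵥ u + b)) + y ⬝ᵥ A *ᵥ y = t * g := by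
      rw [hy1, hy2]
      have : t * t * a = t * (t * a) := by ring
      rw [this, hta]; ring
    have hmono := hglobal (u + y) hvK
    rw [hexp, hdec] at hmono
    nlinarith [mul_neg_of_pos_of_neg htpos hneg]
  -- complementarity
  have hcomp : ∀ i, u i * ((A *ᵥ u) i + b i) = 0 := by
    intro i
    rcases (hu0 i).lt_or_eq with hui | hui
    · rcases (hg i).lt_or_eq with hgi | hgi
      · exfalso
        set g : ℝ := (A *ᵥ u) i + b i with hgd
        set a : ℝ := (Pi.single i 1 : Fin n → ℝ) ⬝ᵥ A *ᵥ (Pi.single i 1 : Fin n → ℝ) with ha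
        have hapos : 0 < a := aux_quad_pos hpd (aux_single_ne i)
        set t : ℝ := min (u i) (g / a) with htd
        have htpos : 0 < t := lt_min hui (div_pos hgi hapos)
        set y : Fin n → ℝ := (-t) • (Pi.single i 1 : Fin n → ℝ) with hyd
        have hvK : ∀ j, 0 ≤ (u + y) j := by
          intro j
          rcases eq_or_ne j i with h | h
          · subst h
            have : (u + y) j = u j - t := by
              simp [hyd, sub_eq_add_neg]
            rw [this]
            have : t ≤ u j := min_le_left _ _
            linarith
          · have : y j = 0 := by
              simp [hyd, Pi.single_eq_of_ne h]
            simp [this]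
            exact hu0 j
        have hexp := aux_expand hsymm b u y
        have hy1 : y ⬝ᵥ (A *ᵥ u + b) = -t * g := by
          rw [hyd, aux_single_dot]
          simp [hgd]
        have hy2 : y ⬝ᵥ A *ᵥ y = t * t * a := by
          rw [hyd, aux_single_quad, ha]; ring
        have hta : t * a ≤ g := (le_div_iff₀ hapos).mp (min_le_right _ _)
        have hmono := hglobal (u + y) hvK
        rw [hexp, hy1, hy2] at hmono
        nlinarith
      · rw [← hgi, mul_zero]
    · rw [← hui, zero_mul]
  have hdot : u ⬝ᵥ (A *ᵥ u + b) = 0 := by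
    simp only [dotProduct, Pi.add_apply]
    exact Finset.sum_eq_zero fun i _ => hcomp i
  have hgsum : ∀ i, 0 ≤ (A *ᵥ u + b) i := by
    intro i; simpa using hg i
  refine ⟨u, ⟨hu0, hg, hdot⟩, ?_, ?_, ?_⟩
  · -- uniqueness of LCP solution
    rintro u' ⟨h1, h2, h3⟩
    have h2' : ∀ i, 0 ≤ (A *ᵥ u' + b) i := by
      intro i; simpa using h2 i
    have hn1 : 0 ≤ u' ⬝ᵥ (A *ᵥ u + b) := aux_dot_nonneg h1 hgsum
    have hn2 : 0 ≤ u ⬝ᵥ (A *ᵥ u' + b) := aux_dot_nonneg hu0 h2'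
    have hA' : A *ᵥ (u' - u) = (A *ᵥ u' + b) - (A *ᵥ u + b) := by
      rw [Matrix.mulVec_sub]; abel
    have hqle : (u' - u) ⬝ᵥ A *ᵥ (u' - u) ≤ 0 := by
      rw [hA', dotProduct_sub, sub_dotProduct, sub_dotProduct]
      linarith
    have hw : u' - u = 0 := by
      by_contra h
      exact absurd hqle (not_le.mpr (aux_quad_pos hpd h))
    exact sub_eq_zero.mp hw
  · exact hglobal
  · -- uniqueness of minimizer
    intro v hv heq
    have hexp := aux_expand hsymm b u (v - u)
    have huv : u + (v - u) = v := by abel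
    rw [huv] at hexp
    have hcross : 0 ≤ (v - u) ⬝ᵥ (A *ᵥ u + b) := by
      rw [sub_dotProduct, hdot, sub_zero]
      exact aux_dot_nonneg hv hgsum
    have hqn : 0 ≤ (v - u) ⬝ᵥ A *ᵥ (v - u) := aux_quad_nonneg hpd (v - u)
    have hq0 : (v - u) ⬝ᵥ A *ᵥ (v - u) = 0 := by linarith
    have hw : v - u = 0 := by
      by_contra h
      exact absurd hq0 (ne_of_gt (aux_quad_pos hpd h))
    exact sub_eq_zero.mp hw
end
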